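/- arXiv:2101.11064 — 6 statements merged into one kernel-verified Lean document; each statement's English description precedes it below -/
import Mathlib

section
/- Let U ⊆ ℝ² be open, let λ : U → ℝ be smooth and nowhere zero, and define the Poisson bracket {f,g} = λ·(∂f/∂x ∂g/∂y − ∂f/∂y ∂g/∂x) for smooth f,g : U → ℝ (the bracket of the symplectic form ω = λ⁻¹ dx∧dy). Let h₁,h₂,h₃ : U → ℝ be smooth with h₁ nowhere zero, satisfying {h₁,h₂} = −h₁, {h₁,h₃} = −2h₂, {h₂,h₃} = −h₃, and suppose h₁h₃ − h₂² is the constant function c/4 for some c ∈ ℝ. For z ∈ ℝ define the deformed Hamiltonian functions h_{z,1} = h₁, h_{z,2} = sinhc(2z h₁)·h₂, h_{z,3} = sinhc(2z h₁)·h₂²/h₁ + c/(4·sinhc(2z h₁)·h₁). Then {h_{z,1},h_{z,2}} = −sinhc(2z h_{z,1})·h_{z,1}, {h_{z,1},h_{z,3}} = −2 h_{z,2}, and {h_{z,2},h_{z,3}} = −cosh(2z h_{z,1})·h_{z,3} on U. -/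
/-- The cardinal hyperbolic sine: `sinhc t = sinh t / t` for `t ≠ 0`, `sinhc 0 = 1`. -/
noncomputable def sinhc (t : ℝ) : ℝ := if t = 0 then 1 else Real.sinh t / t

/-- Canonical Poisson bracket on the plane:
`{f,g} = ∂f/∂x ∂g/∂y − ∂f/∂y ∂g/∂x`. -/
noncomputable def pb (f g : ℝ × ℝ → ℝ) (p : ℝ × ℝ) : ℝ :=
  fderiv ℝ f p (1, 0) * fderiv ℝ g p (0, 1) - fderiv ℝ f p (0, 1) * fderiv ℝ g p (1, 0)

/-- Derivative of `sinhc`. -/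
noncomputable def dsinhc (t : ℝ) : ℝ :=
  if t = 0 then 0 else (t * Real.cosh t - Real.sinh t) / t ^ 2

lemma sinhc_ne_zero (t : ℝ) : sinhc t ≠ 0 := by
  unfold sinhc
  split_ifs with h
  · exact one_ne_zero
  · exact div_ne_zero (Real.sinh_eq_zero.not.mpr h) h

lemma sinhc_key (t : ℝ) : t * dsinhc t = Real.cosh t - sinhc t := by
  unfold sinhc dsinhc
  split_ifs with h
  · simp [h]
  · field_simp

lemma hasDerivAt_sinhc {t : ℝ} (ht : t ≠ 0) : HasDerivAt sinhc (dsinhc t) t := by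
  have h := (Real.hasDerivAt_sinh t).div (hasDerivAt_id t) ht
  have he : sinhc =ᶠ[nhds t] fun s => Real.sinh s / id s := by
    filter_upwards [isOpen_ne.mem_nhds ht] with s hs
    simp [sinhc, hs]
  have h2 := h.congr_of_eventuallyEq he
  have : (Real.cosh t * id t - Real.sinh t * 1) / id t ^ 2 = dsinhc t := by
    simp [dsinhc, ht, id]
    ring
  rwa [this] at h2

lemma pb_comb (f g u v : ℝ × ℝ → ℝ) (p : ℝ × ℝ) (Du Dv : ℝ × ℝ →L[ℝ] ℝ) (α β γ δ : ℝ)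
    (hu : HasFDerivAt u Du p) (hv : HasFDerivAt v Dv p)
    (hf : HasFDerivAt f (α • Du + β • Dv) p)
    (hg : HasFDerivAt g (γ • Du + δ • Dv) p) :
    pb f g p = (α * δ - β * γ) * pb u v p := by
  simp only [pb, hf.fderiv, hg.fderiv, hu.fderiv, hv.fderiv, ContinuousLinearMap.add_apply,
    ContinuousLinearMap.coe_smul', Pi.smul_apply, smul_eq_mul]
  ring

set_option maxHeartbeats 1000000 in
/-- On an open `U ⊆ ℝ²` with Poisson bracket `{f,g} = λ·(canonical bracket)`
(`λ` smooth nowhere zero), if smooth `h₁,h₂,h₃` with `h₁` nowhere zero satisfy the sl(2)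
relations `{h₁,h₂} = −h₁`, `{h₁,h₃} = −2h₂`, `{h₂,h₃} = −h₃` and `h₁h₃ − h₂² = c/4`,
then the deformed functions `h_{z,1} = h₁`, `h_{z,2} = sinhc(2z h₁)h₂`,
`h_{z,3} = sinhc(2z h₁)h₂²/h₁ + c/(4 sinhc(2z h₁) h₁)` close the deformed brackets. -/
theorem deformed_sl2_brackets_general
    (U : Set (ℝ × ℝ)) (hU : IsOpen U)
    (lam : ℝ × ℝ → ℝ) (hlam : ContDiffOn ℝ (⊤ : ℕ∞) lam U) (hlam0 : ∀ p ∈ U, lam p ≠ 0)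
    (h₁ h₂ h₃ : ℝ × ℝ → ℝ)
    (hh₁ : ContDiffOn ℝ (⊤ : ℕ∞) h₁ U) (hh₂ : ContDiffOn ℝ (⊤ : ℕ∞) h₂ U)
    (hh₃ : ContDiffOn ℝ (⊤ : ℕ∞) h₃ U)
    (hh₁0 : ∀ p ∈ U, h₁ p ≠ 0)
    (z c : ℝ)
    (hb12 : ∀ p ∈ U, lam p * pb h₁ h₂ p = -h₁ p)
    (hb13 : ∀ p ∈ U, lam p * pb h₁ h₃ p = -(2 * h₂ p))
    (hb23 : ∀ p ∈ U, lam p * pb h₂ h₃ p = -h₃ p)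
    (hcas : ∀ p ∈ U, h₁ p * h₃ p - (h₂ p) ^ 2 = c / 4) :
    (∀ p ∈ U, lam p * pb h₁ (fun q => sinhc (2 * z * h₁ q) * h₂ q) p
        = -(sinhc (2 * z * h₁ p) * h₁ p)) ∧
    (∀ p ∈ U, lam p * pb h₁
        (fun q => sinhc (2 * z * h₁ q) * (h₂ q) ^ 2 / h₁ q
            + c / (4 * sinhc (2 * z * h₁ q) * h₁ q)) p
        = -(2 * (sinhc (2 * z * h₁ p) * h₂ p))) ∧
    (∀ p ∈ U, lam p * pb (fun q => sinhc (2 * z * h₁ q) * h₂ q)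
        (fun q => sinhc (2 * z * h₁ q) * (h₂ q) ^ 2 / h₁ q
            + c / (4 * sinhc (2 * z * h₁ q) * h₁ q)) p
        = -(Real.cosh (2 * z * h₁ p)
            * (sinhc (2 * z * h₁ p) * (h₂ p) ^ 2 / h₁ p
                + c / (4 * sinhc (2 * z * h₁ p) * h₁ p)))) := by
  have main : ∀ p ∈ U,
      (lam p * pb h₁ (fun q => sinhc (2 * z * h₁ q) * h₂ q) p
        = -(sinhc (2 * z * h₁ p) * h₁ p)) ∧
      (lam p * pb h₁
        (fun q => sinhc (2 * z * h₁ q) * (h₂ q) ^ 2 / h₁ q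
            + c / (4 * sinhc (2 * z * h₁ q) * h₁ q)) p
        = -(2 * (sinhc (2 * z * h₁ p) * h₂ p))) ∧
      (lam p * pb (fun q => sinhc (2 * z * h₁ q) * h₂ q)
        (fun q => sinhc (2 * z * h₁ q) * (h₂ q) ^ 2 / h₁ q
            + c / (4 * sinhc (2 * z * h₁ q) * h₁ q)) p
        = -(Real.cosh (2 * z * h₁ p)
            * (sinhc (2 * z * h₁ p) * (h₂ p) ^ 2 / h₁ p
                + c / (4 * sinhc (2 * z * h₁ p) * h₁ p)))) := by
    intro p hp
    have hpU : U ∈ nhds p := hU.mem_nhds hp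
    have ha0 : h₁ p ≠ 0 := hh₁0 p hp
    have hl0 : lam p ≠ 0 := hlam0 p hp
    have hS0 : sinhc (2 * z * h₁ p) ≠ 0 := sinhc_ne_zero _
    have hd₁ : HasFDerivAt h₁ (fderiv ℝ h₁ p) p :=
      (((hh₁.contDiffAt hpU).differentiableAt (by simp))).hasFDerivAt
    have hd₂ : HasFDerivAt h₂ (fderiv ℝ h₂ p) p :=
      (((hh₂.contDiffAt hpU).differentiableAt (by simp))).hasFDerivAt
    set Dh₁ := fderiv ℝ h₁ p with hDh₁
    set Dh₂ := fderiv ℝ h₂ p with hDh₂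
    set a := h₁ p with ha
    set b := h₂ p with hb
    set S := sinhc (2 * z * a) with hSdef
    set K := 2 * z * dsinhc (2 * z * a) with hKdef
    set C := Real.cosh (2 * z * a) with hCdef
    have hKey : a * K = C - S := by
      rw [hKdef, hSdef, hCdef]
      have := sinhc_key (2 * z * a)
      linarith [this]
    -- derivative of q ↦ sinhc (2 z h₁ q)
    have hS : HasFDerivAt (fun q => sinhc (2 * z * h₁ q)) (K • Dh₁) p := by
      by_cases hz : z = 0
      · subst hz
        have hfun : (fun q : ℝ × ℝ => sinhc (2 * 0 * h₁ q)) = fun _ => sinhc 0 := by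
          funext q; norm_num
        have h0 : HasFDerivAt (fun q : ℝ × ℝ => sinhc (2 * 0 * h₁ q))
            (0 : ℝ × ℝ →L[ℝ] ℝ) p := by
          rw [hfun]; exact hasFDerivAt_const _ _
        have : K = 0 := by simp [hKdef, dsinhc]
        rw [this, zero_smul]
        exact h0
      · have ht : 2 * z * a ≠ 0 := mul_ne_zero (mul_ne_zero two_ne_zero hz) ha0
        have hinner : HasFDerivAt (fun q => 2 * z * h₁ q) ((2 * z) • Dh₁) p :=
          hd₁.const_mul (2 * z)
        have hout : HasDerivAt sinhc (dsinhc (2 * z * a)) (2 * z * h₁ p) := by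
          rw [← ha]; exact hasDerivAt_sinhc ht
        have hcomp := hout.comp_hasFDerivAt p hinner
        have : dsinhc (2 * z * a) • (2 * z) • Dh₁ = K • Dh₁ := by
          rw [smul_smul, hKdef]; ring_nf
        rw [← this]
        exact hcomp
    -- decompositions
    have hf₁ : HasFDerivAt h₁ ((1 : ℝ) • Dh₁ + (0 : ℝ) • Dh₂) p := by
      simpa using hd₁
    have hf₂ : HasFDerivAt (fun q => sinhc (2 * z * h₁ q) * h₂ q)
        ((K * b) • Dh₁ + S • Dh₂) p := by
      have h := hS.mul hd₂
      refine h.congr_fderiv ?_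
      match_scalars <;> ring
    have hsq : HasFDerivAt (fun q => (h₂ q) ^ 2) ((2 * b) • Dh₂) p := by
      have h := hd₂.mul hd₂
      have he : (fun q : ℝ × ℝ => (h₂ q) ^ 2) = fun q => h₂ q * h₂ q := by
        funext q; ring
      rw [he]
      refine h.congr_fderiv ?_
      match_scalars <;> ring
    have hnum : HasFDerivAt (fun q => sinhc (2 * z * h₁ q) * (h₂ q) ^ 2)
        ((K * b ^ 2) • Dh₁ + (2 * S * b) • Dh₂) p := by
      have h := hS.mul hsq
      refine h.congr_fderiv ?_
      match_scalars <;> ring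
    have hden : HasFDerivAt (fun q => 4 * sinhc (2 * z * h₁ q) * h₁ q)
        ((4 * S + 4 * a * K) • Dh₁ + (0 : ℝ) • Dh₂) p := by
      have h := (hS.const_mul 4).mul hd₁
      have he : (fun q : ℝ × ℝ => 4 * sinhc (2 * z * h₁ q) * h₁ q)
          = fun q => (4 * sinhc (2 * z * h₁ q)) * h₁ q := by
        funext q; ring
      rw [he]
      refine h.congr_fderiv ?_
      match_scalars <;> ring
    have hden0 : 4 * sinhc (2 * z * h₁ p) * h₁ p ≠ 0 := by
      rw [← ha]
      exact mul_ne_zero (mul_ne_zero four_ne_zero hS0) ha0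
    have hf₃ : HasFDerivAt
        (fun q => sinhc (2 * z * h₁ q) * (h₂ q) ^ 2 / h₁ q
            + c / (4 * sinhc (2 * z * h₁ q) * h₁ q))
        ((K * b ^ 2 / a - S * b ^ 2 / a ^ 2 - c * (K * a + S) / (4 * S ^ 2 * a ^ 2)) • Dh₁
          + (2 * S * b / a) • Dh₂) p := by
      have hinv₁ : HasFDerivAt (fun q => (h₁ q)⁻¹) ((-((h₁ p) ^ 2)⁻¹) • Dh₁) p :=
        (hasDerivAt_inv ha0).comp_hasFDerivAt p hd₁
      have hinvd : HasFDerivAt (fun q => (4 * sinhc (2 * z * h₁ q) * h₁ q)⁻¹)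
          ((-((4 * sinhc (2 * z * h₁ p) * h₁ p) ^ 2)⁻¹) •
            ((4 * S + 4 * a * K) • Dh₁ + (0 : ℝ) • Dh₂)) p :=
        (hasDerivAt_inv hden0).comp_hasFDerivAt p hden
      have hfun : (fun q => sinhc (2 * z * h₁ q) * (h₂ q) ^ 2 / h₁ q
            + c / (4 * sinhc (2 * z * h₁ q) * h₁ q))
          = (fun q => sinhc (2 * z * h₁ q) * (h₂ q) ^ 2 * (h₁ q)⁻¹
            + c * (4 * sinhc (2 * z * h₁ q) * h₁ q)⁻¹) := by
        funext q
        rw [div_eq_mul_inv, div_eq_mul_inv]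
      rw [hfun]
      have h1 := hnum.mul hinv₁
      have h2 := hinvd.const_mul c
      refine (h1.add h2).congr_fderiv ?_
      simp only [← ha, ← hb, ← hSdef]
      match_scalars <;> (field_simp; try ring)
    clear_value Dh₁ Dh₂ a b S K C
    refine ⟨?_, ?_, ?_⟩
    · rw [pb_comb _ _ h₁ h₂ p Dh₁ Dh₂ 1 0 (K * b) S hd₁ hd₂ hf₁ hf₂]
      have hP := hb12 p hp
      rw [← ha] at hP
      linear_combination S * hP
    · rw [pb_comb _ _ h₁ h₂ p Dh₁ Dh₂ 1 0
        (K * b ^ 2 / a - S * b ^ 2 / a ^ 2 - c * (K * a + S) / (4 * S ^ 2 * a ^ 2))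
        (2 * S * b / a) hd₁ hd₂ hf₁ hf₃]
      have hP := hb12 p hp
      rw [← ha] at hP
      have hPv : pb h₁ h₂ p = -a / lam p := by
        field_simp
        linarith [hP]
      rw [hPv]
      field_simp [hS0, ha0, hl0]
      ring
    · rw [pb_comb _ _ h₁ h₂ p Dh₁ Dh₂ (K * b) S
        (K * b ^ 2 / a - S * b ^ 2 / a ^ 2 - c * (K * a + S) / (4 * S ^ 2 * a ^ 2))
        (2 * S * b / a) hd₁ hd₂ hf₂ hf₃]
      have hP := hb12 p hp
      rw [← ha] at hP
      have hPv : pb h₁ h₂ p = -a / lam p := by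
        field_simp
        linarith [hP]
      rw [hPv]
      have hKv : K = (C - S) / a := by
        field_simp
        linarith [hKey]
      rw [hKv]
      field_simp [hS0, ha0, hl0]
      ring
  exact ⟨fun p hp => (main p hp).1, fun p hp => (main p hp).2.1, fun p hp => (main p hp).2.2⟩
end

section
/- Fix z, c ∈ ℝ and let U = {(x,y) ∈ ℝ² : x ≠ 0}. Define smooth vector fields on U by X_{z,1} = (0, −x), X_{z,2} = ( −(1/2)·sinhc(z x²)·x , (cosh(z x²) − (1/2)·sinhc(z x²))·y ), X_{z,3} = ( sinhc(z x²)·y , (c/x³)·cosh(z x²)/sinhc²(z x²) + ((sinhc(z x²) − cosh(z x²))/x)·y² ). Then their Lie brackets satisfy [X_{z,1}, X_{z,2}] = cosh(z x²)·X_{z,1}, [X_{z,1}, X_{z,3}] = 2·X_{z,2}, and [X_{z,2}, X_{z,3}] = cosh(z x²)·X_{z,3} + z²·( c + x²y²·sinhc²(z x²) )·X_{z,1}. -/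
/-- Lie bracket of vector fields on (an open subset of) ℝ²:
`[V,W](p) = DW(p)·V(p) − DV(p)·W(p)`. -/
noncomputable def lie2 (V W : ℝ × ℝ → ℝ × ℝ) (p : ℝ × ℝ) : ℝ × ℝ :=
  fderiv ℝ W p (V p) - fderiv ℝ V p (W p)

/-- The deformed Milne–Pinney vector field `X_{z,1}`. -/
noncomputable def XMP1 : ℝ × ℝ → ℝ × ℝ := fun q => (0, -q.1)

/-- The deformed Milne–Pinney vector field `X_{z,2}`. -/
noncomputable def XMP2 (z : ℝ) : ℝ × ℝ → ℝ × ℝ := fun q =>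
  (-(1 / 2) * sinhc (z * q.1 ^ 2) * q.1,
    (Real.cosh (z * q.1 ^ 2) - (1 / 2) * sinhc (z * q.1 ^ 2)) * q.2)

/-- The deformed Milne–Pinney vector field `X_{z,3}`. -/
noncomputable def XMP3 (z c : ℝ) : ℝ × ℝ → ℝ × ℝ := fun q =>
  (sinhc (z * q.1 ^ 2) * q.2,
    c / q.1 ^ 3 * Real.cosh (z * q.1 ^ 2) / (sinhc (z * q.1 ^ 2)) ^ 2
      + (sinhc (z * q.1 ^ 2) - Real.cosh (z * q.1 ^ 2)) / q.1 * q.2 ^ 2)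

lemma sinh_eq_sinhc (t : ℝ) : Real.sinh t = t * sinhc t := by
  unfold sinhc
  split_ifs with h
  · simp [h]
  · field_simp

lemma hasDerivAt_sinhc_sq (z : ℝ) {x : ℝ} (hx : x ≠ 0) :
    HasDerivAt (fun t => sinhc (z * t ^ 2))
      (2 * (Real.cosh (z * x ^ 2) - sinhc (z * x ^ 2)) / x) x := by
  rcases eq_or_ne z 0 with rfl | hz
  · have h0 : (fun t : ℝ => sinhc (0 * t ^ 2)) = fun _ : ℝ => (1 : ℝ) := by
      funext t; simp [sinhc]
    rw [h0]
    have : 2 * (Real.cosh (0 * x ^ 2) - sinhc (0 * x ^ 2)) / x = 0 := by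
      simp [sinhc]
    rw [this]
    exact hasDerivAt_const x 1
  · have hzx : z * x ^ 2 ≠ 0 := mul_ne_zero hz (pow_ne_zero 2 hx)
    have hu : HasDerivAt (fun t : ℝ => z * t ^ 2) (z * (2 * x ^ 1)) x :=
      (hasDerivAt_pow 2 x).const_mul z
    have hsinh : HasDerivAt (fun t : ℝ => Real.sinh (z * t ^ 2))
        (Real.cosh (z * x ^ 2) * (z * (2 * x ^ 1))) x :=
      by have := (Real.hasDerivAt_sinh (z * x ^ 2)).comp x hu; exact this
    have hdiv := hsinh.div hu hzx
    have heq : (fun t : ℝ => Real.sinh (z * t ^ 2) / (z * t ^ 2))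
        =ᶠ[nhds x] fun t => sinhc (z * t ^ 2) := by
      filter_upwards [eventually_ne_nhds hx] with t ht
      have : z * t ^ 2 ≠ 0 := mul_ne_zero hz (pow_ne_zero 2 ht)
      simp [sinhc, this]
    have h2 := hdiv.congr_of_eventuallyEq heq.symm
    refine h2.congr_deriv ?_
    have hS : sinhc (z * x ^ 2) = Real.sinh (z * x ^ 2) / (z * x ^ 2) := by
      simp [sinhc, hzx]
    rw [hS]
    field_simp

lemma hasDerivAt_cosh_sq (z : ℝ) (x : ℝ) :
    HasDerivAt (fun t => Real.cosh (z * t ^ 2))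
      (Real.sinh (z * x ^ 2) * (z * (2 * x ^ 1))) x :=
  by have := (Real.hasDerivAt_cosh (z * x ^ 2)).comp x ((hasDerivAt_pow 2 x).const_mul z); exact this

/-- Lie brackets of the deformed Milne–Pinney vector fields on `{x ≠ 0}`:
`[X_{z,1},X_{z,2}] = cosh(z x²) X_{z,1}`, `[X_{z,1},X_{z,3}] = 2 X_{z,2}`,
`[X_{z,2},X_{z,3}] = cosh(z x²) X_{z,3} + z²(c + x²y² sinhc²(z x²)) X_{z,1}`. -/
theorem deformed_milnePinney_vectorFields (z c : ℝ) :
    ∀ p : ℝ × ℝ, p.1 ≠ 0 →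
      lie2 XMP1 (XMP2 z) p = Real.cosh (z * p.1 ^ 2) • XMP1 p ∧
      lie2 XMP1 (XMP3 z c) p = (2 : ℝ) • XMP2 z p ∧
      lie2 (XMP2 z) (XMP3 z c) p
        = Real.cosh (z * p.1 ^ 2) • XMP3 z c p
          + (z ^ 2 * (c + p.1 ^ 2 * p.2 ^ 2 * (sinhc (z * p.1 ^ 2)) ^ 2)) • XMP1 p := by
  rintro ⟨x, y⟩ hx
  simp only at hx
  have hSne : sinhc (z * x ^ 2) ≠ 0 := sinhc_ne_zero _
  have hS := hasDerivAt_sinhc_sq z hx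
  have hC := hasDerivAt_cosh_sq z x
  have hfst : HasFDerivAt (fun q : ℝ × ℝ => q.1) (ContinuousLinearMap.fst ℝ ℝ ℝ) (x, y) :=
    hasFDerivAt_fst
  have hsnd : HasFDerivAt (fun q : ℝ × ℝ => q.2) (ContinuousLinearMap.snd ℝ ℝ ℝ) (x, y) :=
    hasFDerivAt_snd
  -- X1
  have H1 : HasFDerivAt XMP1 _ (x, y) :=
    HasFDerivAt.prodMk (hasFDerivAt_const (0 : ℝ) (x, y)) hfst.neg
  -- X2
  have hS2 : HasFDerivAt (fun q : ℝ × ℝ => sinhc (z * q.1 ^ 2)) _ (x, y) :=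
    (hS.comp_hasFDerivAt (x, y) hfst :)
  have hC2 : HasFDerivAt (fun q : ℝ × ℝ => Real.cosh (z * q.1 ^ 2)) _ (x, y) :=
    (hC.comp_hasFDerivAt (x, y) hfst :)
  have H2 : HasFDerivAt (XMP2 z) _ (x, y) :=
    ((hS2.const_mul (-(1 / 2) : ℝ)).mul hfst).prodMk
      ((hC2.sub (hS2.const_mul ((1 / 2) : ℝ))).mul hsnd)
  -- X3
  have hA : HasDerivAt (fun t : ℝ =>
      c / t ^ 3 * Real.cosh (z * t ^ 2) / (sinhc (z * t ^ 2)) ^ 2) _ x :=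
    (((hasDerivAt_const x c).div (hasDerivAt_pow 3 x) (pow_ne_zero 3 hx)).mul hC).div
      (hS.pow 2) (pow_ne_zero 2 hSne)
  have hB : HasDerivAt (fun t : ℝ =>
      (sinhc (z * t ^ 2) - Real.cosh (z * t ^ 2)) / t) _ x :=
    (hS.sub hC).div (hasDerivAt_id x) hx
  have hy2 : HasFDerivAt (fun q : ℝ × ℝ => q.2 ^ 2) _ (x, y) :=
    ((hasDerivAt_pow 2 y).comp_hasFDerivAt (x, y) hsnd :)
  have H3 : HasFDerivAt (XMP3 z c) _ (x, y) :=
    (hS2.mul hsnd).prodMk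
      ((hA.comp_hasFDerivAt (x, y) hfst :).add
        ((hB.comp_hasFDerivAt (x, y) hfst :).mul hy2))
  have e1 := H1.fderiv
  have e2 := H2.fderiv
  have e3 := H3.fderiv
  have hsinh : Real.sinh (z * x ^ 2) = z * x ^ 2 * sinhc (z * x ^ 2) := sinh_eq_sinhc _
  refine ⟨?_, ?_, ?_⟩
  · simp only [lie2, e1, e2]
    simp only [XMP1, XMP2, ContinuousLinearMap.prod_apply, ContinuousLinearMap.add_apply,
      ContinuousLinearMap.sub_apply, ContinuousLinearMap.smul_apply, ContinuousLinearMap.neg_apply,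
      ContinuousLinearMap.coe_fst', ContinuousLinearMap.coe_snd', ContinuousLinearMap.zero_apply,
      smul_eq_mul, Pi.sub_apply, Pi.mul_apply, Pi.div_apply, Function.comp_apply, Prod.mk_sub_mk, Prod.smul_mk, Prod.mk.injEq]
    constructor <;> (try simp only [hsinh]) <;> field_simp <;> ring
  · simp only [lie2, e1, e3]
    simp only [XMP1, XMP2, XMP3, ContinuousLinearMap.prod_apply, ContinuousLinearMap.add_apply,
      ContinuousLinearMap.sub_apply, ContinuousLinearMap.smul_apply, ContinuousLinearMap.neg_apply,
      ContinuousLinearMap.coe_fst', ContinuousLinearMap.coe_snd', ContinuousLinearMap.zero_apply,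
      smul_eq_mul, Pi.sub_apply, Pi.mul_apply, Pi.div_apply, Function.comp_apply, Prod.mk_sub_mk, Prod.smul_mk, Prod.mk.injEq]
    constructor <;> (try simp only [hsinh]) <;> field_simp <;> ring
  · simp only [lie2, e2, e3]
    simp only [XMP1, XMP2, XMP3, ContinuousLinearMap.prod_apply, ContinuousLinearMap.add_apply,
      ContinuousLinearMap.sub_apply, ContinuousLinearMap.smul_apply, ContinuousLinearMap.neg_apply,
      ContinuousLinearMap.coe_fst', ContinuousLinearMap.coe_snd', ContinuousLinearMap.zero_apply,
      smul_eq_mul, Pi.sub_apply, Pi.mul_apply, Pi.div_apply, Function.comp_apply, Prod.mk_sub_mk, Prod.smul_mk, Prod.mk_add_mk, Prod.mk.injEq]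
    constructor <;> (try simp only [hsinh]) <;> field_simp [sinhc_ne_zero] <;> ring
end

section
/- For every c ∈ ℝ, the smooth functions on U = {(x,y) ∈ ℝ² : x ≠ 0} given by h₁ = x, h₂ = −x y, h₃ = c/(4x) + x y² satisfy, with respect to the canonical Poisson bracket {f,g} = ∂f/∂x ∂g/∂y − ∂f/∂y ∂g/∂x, the sl(2) relations {h₁,h₂} = −h₁, {h₁,h₃} = −2h₂, {h₂,h₃} = −h₃, and moreover h₁h₃ − h₂² = c/4 identically on U. -/
open ContinuousLinearMap in
/-- On `{x ≠ 0}` the functions `h₁ = x`, `h₂ = −xy`,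
`h₃ = c/(4x) + xy²` satisfy the sl(2) relations `{h₁,h₂} = −h₁`, `{h₁,h₃} = −2h₂`,
`{h₂,h₃} = −h₃`, and `h₁h₃ − h₂² = c/4`. -/
theorem sl2_leaf_realization (c : ℝ) :
    ∀ p : ℝ × ℝ, p.1 ≠ 0 →
      pb (fun q => q.1) (fun q => -(q.1 * q.2)) p = -p.1 ∧
      pb (fun q => q.1) (fun q => c / (4 * q.1) + q.1 * q.2 ^ 2) p
        = -(2 * (-(p.1 * p.2))) ∧
      pb (fun q => -(q.1 * q.2)) (fun q => c / (4 * q.1) + q.1 * q.2 ^ 2) p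
        = -(c / (4 * p.1) + p.1 * p.2 ^ 2) ∧
      p.1 * (c / (4 * p.1) + p.1 * p.2 ^ 2) - (-(p.1 * p.2)) ^ 2 = c / 4 := by
  intro p hx
  have h1 : HasFDerivAt (fun q : ℝ × ℝ => q.1) (fst ℝ ℝ ℝ) p := hasFDerivAt_fst
  have h2 : HasFDerivAt (fun q : ℝ × ℝ => -(q.1 * q.2))
      (-(p.1 • snd ℝ ℝ ℝ + p.2 • fst ℝ ℝ ℝ)) p :=
    (hasFDerivAt_fst.mul hasFDerivAt_snd).neg
  have hinv : HasFDerivAt (fun q : ℝ × ℝ => (q.1)⁻¹)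
      ((smulRight (1 : ℝ →L[ℝ] ℝ) (-(p.1 ^ 2)⁻¹)).comp (fst ℝ ℝ ℝ)) p :=
    (hasFDerivAt_inv hx).comp p hasFDerivAt_fst
  have heq : (fun q : ℝ × ℝ => c / (4 * q.1) + q.1 * q.2 ^ 2)
      = fun q : ℝ × ℝ => (c / 4) * (q.1)⁻¹ + q.1 * (q.2 * q.2) := by
    funext q; rw [sq]; ring
  have h3 : HasFDerivAt (fun q : ℝ × ℝ => c / (4 * q.1) + q.1 * q.2 ^ 2)
      ((c / 4) • ((smulRight (1 : ℝ →L[ℝ] ℝ) (-(p.1 ^ 2)⁻¹)).comp (fst ℝ ℝ ℝ))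
        + (p.1 • (p.2 • snd ℝ ℝ ℝ + p.2 • snd ℝ ℝ ℝ) + (p.2 * p.2) • fst ℝ ℝ ℝ)) p := by
    rw [heq]
    exact (hinv.const_mul (c / 4)).add
      (hasFDerivAt_fst.mul (hasFDerivAt_snd.mul hasFDerivAt_snd))
  refine ⟨?_, ?_, ?_, ?_⟩
  · simp only [pb, h1.fderiv, h2.fderiv]
    simp
  · simp only [pb, h1.fderiv, h3.fderiv]
    simp
    ring
  · simp only [pb, h2.fderiv, h3.fderiv]
    simp
    field_simp
    ring
  · field_simp
    ring
end

section
/- Let k > 0 and U = {(x,y) ∈ ℝ² : x² < k}. The smooth functions h₁ = −√(k − x²)·cos y, h₂ = √(k − x²)·sin y, h₃ = x satisfy, with respect to the canonical Poisson bracket {f,g} = ∂f/∂x ∂g/∂y − ∂f/∂y ∂g/∂x, the so(3) relations {h₁,h₂} = h₃, {h₂,h₃} = h₁, {h₃,h₁} = h₂, and moreover h₁² + h₂² + h₃² = k identically on U. -/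
/-!
Each of the three functions has the separated form `a(x) · b(y)`, so its differential is
`a' b dx + a b' dy`. With `s = √(k - x²)` one has `s' = -x / s`; the brackets with `h₃ = x` are
then immediate, while `{h₁, h₂} = h₃` (after clearing `s`) and the Casimir identity reduce to
`sin² y + cos² y = 1`.
-/

open ContinuousLinearMap

theorem pb_eq_of_hasFDerivAt {f g : ℝ × ℝ → ℝ} {p : ℝ × ℝ} {fx fy gx gy : ℝ}
    (hf : HasFDerivAt f (fx • fst ℝ ℝ ℝ + fy • snd ℝ ℝ ℝ) p)
    (hg : HasFDerivAt g (gx • fst ℝ ℝ ℝ + gy • snd ℝ ℝ ℝ) p) :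
    pb f g p = fx * gy - fy * gx := by
  simp [pb, hf.fderiv, hg.fderiv]

theorem hasFDerivAt_mul_comp_fst_snd {a b : ℝ → ℝ} {a' b' : ℝ} {p : ℝ × ℝ}
    (ha : HasDerivAt a a' p.1) (hb : HasDerivAt b b' p.2) :
    HasFDerivAt (fun q : ℝ × ℝ => a q.1 * b q.2)
      ((a' * b p.2) • fst ℝ ℝ ℝ + (a p.1 * b') • snd ℝ ℝ ℝ) p := by
  have hafst := ha.comp_hasFDerivAt p (hasFDerivAt_fst (𝕜 := ℝ) (p := p))
  have hbsnd := hb.comp_hasFDerivAt p (hasFDerivAt_snd (𝕜 := ℝ) (p := p))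
  refine (hafst.mul hbsnd).congr_fderiv ?_
  ext <;> simp [mul_comm]

theorem hasDerivAt_sqrt_sub_sq {k x : ℝ} (hx : x ^ 2 < k) :
    HasDerivAt (fun t => √(k - t ^ 2)) (-x / √(k - x ^ 2)) x := by
  have hinner := (hasDerivAt_pow 2 x).const_sub k
  convert hinner.sqrt (by linarith) using 1
  field_simp
  ring

theorem so3_leaf_realization_general (k : ℝ) :
    ∀ p : ℝ × ℝ, p.1 ^ 2 < k →
      pb (fun q => -(Real.sqrt (k - q.1 ^ 2) * Real.cos q.2))
          (fun q => Real.sqrt (k - q.1 ^ 2) * Real.sin q.2) p = p.1 ∧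
      pb (fun q => Real.sqrt (k - q.1 ^ 2) * Real.sin q.2) (fun q => q.1) p
        = -(Real.sqrt (k - p.1 ^ 2) * Real.cos p.2) ∧
      pb (fun q => q.1) (fun q => -(Real.sqrt (k - q.1 ^ 2) * Real.cos q.2)) p
        = Real.sqrt (k - p.1 ^ 2) * Real.sin p.2 ∧
      (-(Real.sqrt (k - p.1 ^ 2) * Real.cos p.2)) ^ 2
        + (Real.sqrt (k - p.1 ^ 2) * Real.sin p.2) ^ 2 + p.1 ^ 2 = k := by
  rintro ⟨x, y⟩ hp
  dsimp only at hp ⊢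
  have hs_sq : √(k - x ^ 2) ^ 2 = k - x ^ 2 := Real.sq_sqrt (by linarith)
  have hs_ne : √(k - x ^ 2) ≠ 0 := (Real.sqrt_pos.mpr (by linarith)).ne'
  have hsqrt := hasDerivAt_sqrt_sub_sq (x := x) hp
  have h₁ := (hasFDerivAt_mul_comp_fst_snd (p := (x, y)) hsqrt (Real.hasDerivAt_cos y)).fun_neg
  rw [neg_add, ← neg_smul, ← neg_smul] at h₁
  have h₂ := hasFDerivAt_mul_comp_fst_snd (p := (x, y)) hsqrt (Real.hasDerivAt_sin y)
  have h₃ : HasFDerivAt (fun q : ℝ × ℝ => q.1) ((1 : ℝ) • fst ℝ ℝ ℝ + (0 : ℝ) • snd ℝ ℝ ℝ) (x, y) :=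
    hasFDerivAt_fst.congr_fderiv (by simp)
  have pyth := Real.sin_sq_add_cos_sq y
  refine ⟨?_, ?_, ?_, ?_⟩
  · rw [pb_eq_of_hasFDerivAt h₁ h₂]
    field_simp
    linear_combination x * pyth
  · rw [pb_eq_of_hasFDerivAt h₂ h₃]
    ring
  · rw [pb_eq_of_hasFDerivAt h₃ h₁]
    ring
  · linear_combination √(k - x ^ 2) ^ 2 * pyth + hs_sq

/-- On `{x² < k}` the functions
`h₁ = −√(k−x²)·cos y`, `h₂ = √(k−x²)·sin y`, `h₃ = x` satisfy the so(3) relations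
`{h₁,h₂} = h₃`, `{h₂,h₃} = h₁`, `{h₃,h₁} = h₂`, and `h₁² + h₂² + h₃² = k`. -/
theorem so3_leaf_realization (k : ℝ) (hk : 0 < k) :
    ∀ p : ℝ × ℝ, p.1 ^ 2 < k →
      pb (fun q => -(Real.sqrt (k - q.1 ^ 2) * Real.cos q.2))
          (fun q => Real.sqrt (k - q.1 ^ 2) * Real.sin q.2) p = p.1 ∧
      pb (fun q => Real.sqrt (k - q.1 ^ 2) * Real.sin q.2) (fun q => q.1) p
        = -(Real.sqrt (k - p.1 ^ 2) * Real.cos p.2) ∧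
      pb (fun q => q.1) (fun q => -(Real.sqrt (k - q.1 ^ 2) * Real.cos q.2)) p
        = Real.sqrt (k - p.1 ^ 2) * Real.sin p.2 ∧
      (-(Real.sqrt (k - p.1 ^ 2) * Real.cos p.2)) ^ 2
        + (Real.sqrt (k - p.1 ^ 2) * Real.sin p.2) ^ 2 + p.1 ^ 2 = k :=
  so3_leaf_realization_general k
end

section
/- Let U = {(q,p) ∈ ℝ² : p ≠ 0}. (a) The smooth vector fields X₁ = (q, −p) and X₂ = (−q² − 1/p², 2qp) on U satisfy the Lie-bracket relation [X₁, X₂] = X₂. (b) The smooth functions h₁ = −q p and h₂ = 1/p − q² p on U satisfy {h₁, h₂} = h₂ with respect to the canonical Poisson bracket {f,g} = ∂f/∂q ∂g/∂p − ∂f/∂p ∂g/∂q. -/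
/-- On `{p ≠ 0}`: (a) the SISf vector fields `X₁ = (q, −p)`,
`X₂ = (−q² − 1/p², 2qp)` satisfy `[X₁,X₂] = X₂`; (b) the Hamiltonians `h₁ = −qp`,
`h₂ = 1/p − q²p` satisfy `{h₁,h₂} = h₂`. -/
theorem sisf_lie_hamilton :
    (∀ x : ℝ × ℝ, x.2 ≠ 0 →
      lie2 (fun q => (q.1, -q.2)) (fun q => (-q.1 ^ 2 - 1 / q.2 ^ 2, 2 * q.1 * q.2)) x
        = (-x.1 ^ 2 - 1 / x.2 ^ 2, 2 * x.1 * x.2)) ∧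
    (∀ x : ℝ × ℝ, x.2 ≠ 0 →
      pb (fun q => -(q.1 * q.2)) (fun q => 1 / q.2 - q.1 ^ 2 * q.2) x
        = 1 / x.2 - x.1 ^ 2 * x.2) := by
  constructor
  · intro x hx
    have hq1 : HasFDerivAt (fun q : ℝ × ℝ => q.1) (ContinuousLinearMap.fst ℝ ℝ ℝ) x :=
      hasFDerivAt_fst
    have hq2 : HasFDerivAt (fun q : ℝ × ℝ => q.2) (ContinuousLinearMap.snd ℝ ℝ ℝ) x :=
      hasFDerivAt_snd
    have hV : HasFDerivAt (fun q : ℝ × ℝ => (q.1, -q.2)) _ x := hq1.prodMk hq2.neg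
    have hsq : HasFDerivAt (fun q : ℝ × ℝ => q.1 ^ 2) _ x :=
      (hasDerivAt_pow 2 x.1).comp_hasFDerivAt x hq1
    have hinv : HasFDerivAt (fun q : ℝ × ℝ => 1 / q.2 ^ 2) _ x :=
      (((hasDerivAt_const x.2 (1:ℝ)).div (hasDerivAt_pow 2 x.2)
        (pow_ne_zero 2 hx))).comp_hasFDerivAt x hq2
    have hW : HasFDerivAt
        (fun q : ℝ × ℝ => (-q.1 ^ 2 - 1 / q.2 ^ 2, 2 * q.1 * q.2)) _ x :=
      (hsq.neg.sub hinv).prodMk ((hq1.const_mul 2).mul hq2)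
    simp only [lie2, hV.fderiv, hW.fderiv]
    simp only [ContinuousLinearMap.prod_apply, ContinuousLinearMap.sub_apply,
      ContinuousLinearMap.add_apply, ContinuousLinearMap.neg_apply,
      ContinuousLinearMap.smul_apply, ContinuousLinearMap.coe_fst',
      ContinuousLinearMap.coe_snd', smul_eq_mul, Prod.mk_sub_mk, Prod.mk.injEq]
    constructor <;> field_simp <;> ring
  · intro x hx
    have hq1 : HasFDerivAt (fun q : ℝ × ℝ => q.1) (ContinuousLinearMap.fst ℝ ℝ ℝ) x :=
      hasFDerivAt_fst
    have hq2 : HasFDerivAt (fun q : ℝ × ℝ => q.2) (ContinuousLinearMap.snd ℝ ℝ ℝ) x :=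
      hasFDerivAt_snd
    have hsq : HasFDerivAt (fun q : ℝ × ℝ => q.1 ^ 2) _ x :=
      (hasDerivAt_pow 2 x.1).comp_hasFDerivAt x hq1
    have h1 : HasFDerivAt (fun q : ℝ × ℝ => -(q.1 * q.2)) _ x := (hq1.mul hq2).neg
    have hinv : HasFDerivAt (fun q : ℝ × ℝ => 1 / q.2) _ x :=
      (((hasDerivAt_const x.2 (1:ℝ)).div (hasDerivAt_id x.2) hx)).comp_hasFDerivAt x hq2
    have h2 : HasFDerivAt (fun q : ℝ × ℝ => 1 / q.2 - q.1 ^ 2 * q.2) _ x :=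
      hinv.sub (hsq.mul hq2)
    simp only [pb, h1.fderiv, h2.fderiv]
    simp only [ContinuousLinearMap.sub_apply, ContinuousLinearMap.add_apply,
      ContinuousLinearMap.neg_apply, ContinuousLinearMap.smul_apply,
      ContinuousLinearMap.coe_fst', ContinuousLinearMap.coe_snd', smul_eq_mul, id]
    field_simp
    ring
end

section
/- Let I ⊆ ℝ be an open interval, g : I → ℝ smooth and nowhere zero, and α ∈ ℝ. If y : I → ℝ is a nowhere-zero solution of the nonlinear ODE y'' − (g'(x)/(2g(x)))·y' + g(x)·y − 2α·g(x)/y³ = 0, then the function x ↦ (y'(x))²/g(x) + y(x)² + 2α/y(x)² is constant on I. -/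
/-!
Along any solution, the derivative of `(y')²/g + y² + 2α/y²` is the left-hand side of the
equation multiplied by the integrating factor `2y'/g`, so it vanishes identically on `I`; being
open and convex, `I` is connected, so the quantity is constant there.
-/

theorem hasDerivAt_pinney_invariant {g y y' : ℝ → ℝ} {α x g₁ y₂ : ℝ}
    (hy : HasDerivAt y (y' x) x) (hy' : HasDerivAt y' y₂ x) (hg : HasDerivAt g g₁ x)
    (hg0 : g x ≠ 0) (hy0 : y x ≠ 0) :
    HasDerivAt (fun t => y' t ^ 2 / g t + y t ^ 2 + 2 * α / y t ^ 2)
      (2 * y' x / g x *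
        (y₂ - g₁ / (2 * g x) * y' x + g x * y x - 2 * α * g x / y x ^ 3)) x := by
  have h := (((hy'.fun_pow 2).fun_div hg hg0).fun_add (hy.fun_pow 2)).fun_add
    ((hasDerivAt_const x (2 * α)).fun_div (hy.fun_pow 2) (pow_ne_zero 2 hy0))
  refine h.congr_deriv ?_
  field_simp
  ring

/-- If `y` is a nowhere-zero solution of the nonlinear ODE
`y'' − (g'/(2g))·y' + g·y − 2α·g/y³ = 0` on an open interval `I` where the smooth `g`
is nowhere zero, then `(y')²/g + y² + 2α/y²` is constant on `I`. -/
theorem invariant_deformed_pinney_ode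
    (I : Set ℝ) (hI : IsOpen I) (hIconv : Convex ℝ I)
    (g y : ℝ → ℝ) (α : ℝ)
    (hg : ContDiffOn ℝ (⊤ : ℕ∞) g I) (hg0 : ∀ x ∈ I, g x ≠ 0)
    (hy : ContDiffOn ℝ 2 y I) (hy0 : ∀ x ∈ I, y x ≠ 0)
    (hyode : ∀ x ∈ I,
      deriv (deriv y) x - deriv g x / (2 * g x) * deriv y x + g x * y x
        - 2 * α * g x / (y x) ^ 3 = 0) :
    ∀ a ∈ I, ∀ b ∈ I,
      (deriv y a) ^ 2 / g a + (y a) ^ 2 + 2 * α / (y a) ^ 2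
        = (deriv y b) ^ 2 / g b + (y b) ^ 2 + 2 * α / (y b) ^ 2 := by
  have hasDerivAt_of_contDiffOn {f : ℝ → ℝ} {n : WithTop ℕ∞} (hf : ContDiffOn ℝ n f I)
      (hn : n ≠ 0) {x : ℝ} (hx : x ∈ I) : HasDerivAt f (deriv f x) x :=
    ((hf.differentiableOn hn).differentiableAt (hI.mem_nhds hx)).hasDerivAt
  have hy' : ContDiffOn ℝ 1 (deriv y) I := hy.deriv_of_isOpen hI (by norm_num)
  have hinvariant : ∀ x ∈ I, HasDerivAt
      (fun t => deriv y t ^ 2 / g t + y t ^ 2 + 2 * α / y t ^ 2) 0 x := fun x hx => by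
    simpa [hyode x hx] using hasDerivAt_pinney_invariant (α := α)
      (hasDerivAt_of_contDiffOn hy two_ne_zero hx) (hasDerivAt_of_contDiffOn hy' one_ne_zero hx)
      (hasDerivAt_of_contDiffOn hg (by simp) hx) (hg0 x hx) (hy0 x hx)
  intro a ha b hb
  exact hI.is_const_of_deriv_eq_zero hIconv.isPreconnected
    (fun x hx => (hinvariant x hx).differentiableAt.differentiableWithinAt)
    (fun x hx => (hinvariant x hx).deriv) ha hb
end
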